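/- arXiv:1801.07547 — 2 statements merged into one kernel-verified Lean document; each statement's English description precedes it below -/
import Mathlib

section
/- Fix positive integers d and q. Suppose that for every finite d-regular graph G and every β > 0 one has U^q_G(β) ≥ U^q_{K_{d,d}}(β). Then for every finite d-regular graph G, (1/|V(G)|) log c^q(G) ≤ (1/(2d)) log c^q(K_{d,d}), where c^q(H) denotes the number of proper q-colourings of H and K_{d,d} is the complete bipartite graph with parts of size d. -/
/-!
The free energy per vertex `F_G(β) = |V|⁻¹ log Z_G(β)` has derivative `-U_G(β)` and equals
`log q` at `β = 0` for every graph, so the energy hypothesis integrates to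
`F_G(β) ≤ F_{K_{d,d}}(β)` for all `β ≥ 0`. As `β → ∞` the partition function tends to the number
of proper colourings, and the claim follows in the limit. Both limits are finite: a properly
coloured edge of `G` provides two distinct colours, and these colour `K_{d,d}` properly.
-/

noncomputable section

/-- The number of monochromatic edges of `G` under the `q`-colouring `σ`. -/
def monoEdges {V : Type*} (G : SimpleGraph V) {q : ℕ} (σ : V → Fin q) : ℕ :=
  {e ∈ G.edgeSet | ∃ u v, e = s(u, v) ∧ σ u = σ v}.ncard

/-- The `q`-state Potts model partition function at inverse temperature `β`. -/
def pottsZ {V : Type*} [Fintype V] [DecidableEq V] (G : SimpleGraph V) (q : ℕ) (β : ℝ) : ℝ :=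
  ∑ σ : V → Fin q, Real.exp (-β * (monoEdges G σ : ℝ))

/-- The internal energy per particle of the `q`-state Potts model. -/
def pottsU {V : Type*} [Fintype V] [DecidableEq V] (G : SimpleGraph V) (q : ℕ) (β : ℝ) : ℝ :=
  (1 / (Fintype.card V : ℝ)) *
    (∑ σ : V → Fin q, (monoEdges G σ : ℝ) * Real.exp (-β * (monoEdges G σ : ℝ))) / pottsZ G q β

/-- The free energy per particle of the `q`-state Potts model. -/
def pottsF {V : Type*} [Fintype V] [DecidableEq V] (G : SimpleGraph V) (q : ℕ) (β : ℝ) : ℝ :=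
  (1 / (Fintype.card V : ℝ)) * Real.log (pottsZ G q β)

/-- The number of proper `q`-colourings of `G`. -/
def properCount {V : Type*} [Fintype V] [DecidableEq V] (G : SimpleGraph V) (q : ℕ) : ℕ :=
  {σ : V → Fin q | ∀ u v, G.Adj u v → σ u ≠ σ v}.ncard

/-- `G` is `d`-regular: every vertex has exactly `d` neighbours. -/
def IsRegularGraph {V : Type*} (G : SimpleGraph V) (d : ℕ) : Prop :=
  ∀ v, (G.neighborSet v).ncard = d

/-- The complete bipartite graph with two parts of size `d`. -/
def Kdd (d : ℕ) : SimpleGraph (Fin d ⊕ Fin d) := completeBipartiteGraph (Fin d) (Fin d)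

/-- The complete bipartite graph `K_{4,4}`. -/
def K44 : SimpleGraph (Fin 4 ⊕ Fin 4) := completeBipartiteGraph (Fin 4) (Fin 4)

/-- The complete graph `K_5`. -/
def K5 : SimpleGraph (Fin 5) := SimpleGraph.completeGraph (Fin 5)

/-- The disjoint union of `k` copies of a graph `H`. -/
def disjointCopies {W : Type*} (k : ℕ) (H : SimpleGraph W) : SimpleGraph (Fin k × W) where
  Adj a b := a.1 = b.1 ∧ H.Adj a.2 b.2
  symm := ⟨fun _ _ ⟨h1, h2⟩ => ⟨h1.symm, h2.symm⟩⟩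
  loopless := ⟨fun a ⟨_, h2⟩ => H.loopless.irrefl a.2 h2⟩


open Real Filter Topology Finset

section Potts

variable {V : Type*} [Fintype V] {G : SimpleGraph V} {q : ℕ}

lemma monoEdges_eq_zero_iff {σ : V → Fin q} :
    monoEdges G σ = 0 ↔ ∀ u v, G.Adj u v → σ u ≠ σ v := by
  rw [monoEdges, Set.ncard_eq_zero (Set.toFinite _)]
  constructor
  · intro h u v huv hc
    exact (Set.ext_iff.mp h s(u, v)).mp ⟨G.mem_edgeSet.mpr huv, u, v, rfl, hc⟩
  · intro h
    ext e
    simp only [Set.mem_ofPred_eq, Set.mem_empty_iff_false, iff_false]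
    rintro ⟨he, u, v, rfl, huv⟩
    exact h u v (G.mem_edgeSet.mp he) huv

variable [DecidableEq V]

lemma properCount_eq_card_filter (G : SimpleGraph V) (q : ℕ) :
    properCount G q = #{σ : V → Fin q | monoEdges G σ = 0} := by
  simp only [properCount, ← monoEdges_eq_zero_iff]
  rw [Set.ncard_eq_toFinset_card', Set.toFinset_ofPred]

lemma pottsZ_pos (hq : 0 < q) (G : SimpleGraph V) (β : ℝ) : 0 < pottsZ G q β :=
  have : Nonempty (Fin q) := ⟨⟨0, hq⟩⟩
  Finset.sum_pos (fun _ _ => exp_pos _) Finset.univ_nonempty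

lemma hasDerivAt_pottsZ (G : SimpleGraph V) (q : ℕ) (β : ℝ) :
    HasDerivAt (pottsZ G q)
      (-∑ σ : V → Fin q, (monoEdges G σ : ℝ) * exp (-β * monoEdges G σ)) β := by
  rw [← Finset.sum_neg_distrib]
  refine HasDerivAt.fun_sum fun σ _ => ?_
  simpa [mul_comm] using ((hasDerivAt_neg β).mul_const (monoEdges G σ : ℝ)).exp

lemma hasDerivAt_pottsF {β : ℝ} (hZ : 0 < pottsZ G q β) :
    HasDerivAt (pottsF G q) (-pottsU G q β) β := by
  refine (((hasDerivAt_pottsZ G q β).log hZ.ne').const_mul _).congr_deriv ?_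
  simp only [pottsU]
  ring

lemma pottsF_zero [Nonempty V] (G : SimpleGraph V) (q : ℕ) : pottsF G q 0 = log q := by
  have hV : (Fintype.card V : ℝ) ≠ 0 := by exact_mod_cast Fintype.card_ne_zero
  simp [pottsF, pottsZ, Real.log_pow, hV]

lemma tendsto_pottsZ_atTop (G : SimpleGraph V) (q : ℕ) :
    Tendsto (pottsZ G q) atTop (𝓝 (properCount G q)) := by
  have hterm (σ : V → Fin q) : Tendsto (fun β : ℝ => exp (-β * monoEdges G σ)) atTop
      (𝓝 (if monoEdges G σ = 0 then 1 else 0)) := by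
    split_ifs with hσ
    · simp [hσ]
    · have hm : (0 : ℝ) < monoEdges G σ := by exact_mod_cast Nat.pos_of_ne_zero hσ
      exact tendsto_exp_atBot.comp (tendsto_neg_atTop_atBot.atBot_mul_const hm)
  have := tendsto_finsetSum Finset.univ fun σ _ => hterm σ
  rwa [Finset.sum_boole, ← properCount_eq_card_filter] at this

lemma tendsto_pottsF_atTop (hc : 0 < properCount G q) :
    Tendsto (pottsF G q) atTop
      (𝓝 ((1 / (Fintype.card V : ℝ)) * log (properCount G q))) :=
  ((tendsto_pottsZ_atTop G q).log (by positivity)).const_mul _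

lemma pottsF_le_pottsF_of_pottsU_le {W : Type*} [Fintype W] [DecidableEq W]
    {H : SimpleGraph W} (hq : 0 < q) (h0 : pottsF G q 0 = pottsF H q 0)
    (hU : ∀ β, 0 < β → pottsU H q β ≤ pottsU G q β) {β : ℝ} (hβ : 0 ≤ β) :
    pottsF G q β ≤ pottsF H q β := by
  have hder (x : ℝ) : HasDerivAt (fun x => pottsF H q x - pottsF G q x)
      (pottsU G q x - pottsU H q x) x :=
    ((hasDerivAt_pottsF (pottsZ_pos hq H x)).sub
      (hasDerivAt_pottsF (pottsZ_pos hq G x))).congr_deriv (by ring)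
  have hmono : MonotoneOn (fun x => pottsF H q x - pottsF G q x) (Set.Ici 0) := by
    refine monotoneOn_of_deriv_nonneg (convex_Ici 0)
      (fun x _ => (hder x).continuousAt.continuousWithinAt)
      (fun x _ => (hder x).differentiableAt.differentiableWithinAt) fun x hx => ?_
    rw [interior_Ici] at hx
    rw [(hder x).deriv, sub_nonneg]
    exact hU x hx
  have := hmono Set.self_mem_Ici (Set.mem_Ici.mpr hβ) hβ
  simpa only [h0, sub_self, sub_nonneg] using this

end Potts

lemma properCount_completeBipartiteGraph_pos {α β : Type*} [Fintype α] [Fintype β]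
    [DecidableEq α] [DecidableEq β] {q : ℕ} {a b : Fin q} (hab : a ≠ b) :
    0 < properCount (completeBipartiteGraph α β) q := by
  refine (Set.ncard_pos (Set.toFinite _)).mpr ⟨Sum.elim (fun _ => a) (fun _ => b), ?_⟩
  rintro (u | u) (v | v) huv <;> simp_all [eq_comm]

theorem stmt6_general (d q : ℕ) (hd : 0 < d)
    (h : ∀ (V : Type) [Fintype V] [DecidableEq V] [Nonempty V] (G : SimpleGraph V),
      IsRegularGraph G d → ∀ β : ℝ, 0 < β → pottsU (Kdd d) q β ≤ pottsU G q β)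
    (V : Type) [Fintype V] [DecidableEq V] [Nonempty V] (G : SimpleGraph V)
    (hG : IsRegularGraph G d) :
    (1 / (Fintype.card V : ℝ)) * Real.log (properCount G q) ≤
      (1 / (2 * d : ℝ)) * Real.log (properCount (Kdd d) q) := by
  rcases Nat.eq_zero_or_pos (properCount G q) with hc | hcG
  -- `log 0 = 0`, so without proper colourings of `G` the left side vanishes.
  · rw [hc, Nat.cast_zero, log_zero, mul_zero]
    exact mul_nonneg (by positivity) (log_natCast_nonneg _)
  obtain ⟨σ₀, hσ₀⟩ := (Set.ncard_pos (Set.toFinite _)).mp hcG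
  obtain ⟨v⟩ := ‹Nonempty V›
  obtain ⟨u, hvu⟩ : (G.neighborSet v).Nonempty :=
    (Set.ncard_pos (Set.toFinite _)).mp (hG v ▸ hd)
  have hcK : 0 < properCount (Kdd d) q :=
    properCount_completeBipartiteGraph_pos (hσ₀ v u hvu)
  have : Nonempty (Fin d ⊕ Fin d) := ⟨.inl ⟨0, hd⟩⟩
  have hF (β : ℝ) (hβ : β ∈ Set.Ici 0) : pottsF G q β ≤ pottsF (Kdd d) q β :=
    pottsF_le_pottsF_of_pottsU_le (σ₀ v).pos (by rw [pottsF_zero, pottsF_zero])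
      (h V G hG) hβ
  have hlim := le_of_tendsto_of_tendsto (tendsto_pottsF_atTop hcG) (tendsto_pottsF_atTop hcK)
    (eventually_ge_atTop 0 |>.mono hF)
  simpa [Fintype.card_sum, two_mul] using hlim

theorem stmt6 (d q : ℕ) (hd : 0 < d) (hq : 0 < q)
    (h : ∀ (V : Type) [Fintype V] [DecidableEq V] [Nonempty V] (G : SimpleGraph V),
      IsRegularGraph G d → ∀ β : ℝ, 0 < β → pottsU (Kdd d) q β ≤ pottsU G q β)
    (V : Type) [Fintype V] [DecidableEq V] [Nonempty V] (G : SimpleGraph V)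
    (hG : IsRegularGraph G d) :
    (1 / (Fintype.card V : ℝ)) * Real.log (properCount G q) ≤
      (1 / (2 * d : ℝ)) * Real.log (properCount (Kdd d) q) :=
  stmt6_general d q hd h V G hG
end
end

section
/- Let G be a finite 4-regular graph on n vertices and let q ≥ 5 be an integer. Then (1/n) log c^q(G) ≥ (1/5) log c^q(K_5), where c^q(H) denotes the number of proper q-colourings of H and K_5 is the complete graph on 5 vertices. Equivalently, c^q(G) ≥ c^q(K_5)^{n/5}. -/
/-
Colour the vertices greedily along an ordering `f : V ≃ Fin n`: a vertex with `b` earlier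
neighbours always has at least `q - b` free colours, so `c^q(G) ≥ ∏ᵥ (q - b_f(v))`. Averaged over
all orderings, the rank of `v` inside its closed neighbourhood `N[v]` is uniform on
`{0, …, deg v}`, because precomposing `f` with the transposition of `v` and any `w ∈ N[v]` is a
bijection of orderings that turns the rank of `v` into the rank of `w`. Hence some ordering has
`∑ᵥ log (q - b_f(v)) ≥ ∑ᵥ log c^q(K_{deg v + 1}) / (deg v + 1)`, where
`c^q(K_{d+1}) = q (q - 1) ⋯ (q - d)`; for a 4-regular graph the right side is `(n / 5) log c^q(K₅)`.
-/

noncomputable section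

open Finset

section Rank

variable {V ι : Type*} [LinearOrder ι]

def rankIn (f : V → ι) (S : Finset V) (w : V) : ℕ := #{x ∈ S | f x < f w}

lemma rankIn_lt_card {f : V → ι} {S : Finset V} {w : V} (hw : w ∈ S) : rankIn f S w < #S :=
  card_lt_card <| filter_ssubset.2 ⟨w, hw, lt_irrefl _⟩

lemma rankIn_lt_rankIn {f : V → ι} {S : Finset V} {w w' : V} (hw : w ∈ S) (h : f w < f w') :
    rankIn f S w < rankIn f S w' := by
  refine card_lt_card <| (ssubset_iff_of_subset fun x hx => ?_).2
    ⟨w, mem_filter.2 ⟨hw, h⟩, fun hw' => lt_irrefl _ (mem_filter.1 hw').2⟩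
  rw [mem_filter] at hx ⊢
  exact ⟨hx.1, hx.2.trans h⟩

lemma rankIn_injOn {f : V → ι} (hf : Function.Injective f) (S : Finset V) :
    Set.InjOn (rankIn f S) S := fun w hw w' hw' h => by
  by_contra hne
  rcases lt_or_gt_of_ne (hf.ne hne) with hlt | hlt
  · exact (rankIn_lt_rankIn hw hlt).ne h
  · exact (rankIn_lt_rankIn hw' hlt).ne' h

lemma sum_rankIn {M : Type*} [AddCommMonoid M] {f : V → ι} (hf : Function.Injective f)
    (S : Finset V) (g : ℕ → M) : ∑ w ∈ S, g (rankIn f S w) = ∑ k ∈ range #S, g k := by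
  have himage : S.image (rankIn f S) = range #S :=
    eq_of_subset_of_card_le (image_subset_iff.2 fun w hw => mem_range.2 (rankIn_lt_card hw))
      (by rw [card_range, card_image_of_injOn (rankIn_injOn hf S)])
  rw [← himage, sum_image (rankIn_injOn hf S)]

lemma rankIn_comp_swap [DecidableEq V] (f : V → ι) {S : Finset V} {v w : V} (hv : v ∈ S)
    (hw : w ∈ S) : rankIn (f ∘ Equiv.swap v w) S v = rankIn f S w := by
  have hS : ∀ x ∈ S, Equiv.swap v w x ∈ S := fun x hx => by
    rw [Equiv.swap_apply_def]; split_ifs <;> assumption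
  refine card_nbij' (Equiv.swap v w) (Equiv.swap v w) ?_ ?_ ?_ ?_ <;> intro x hx <;>
    simp only [coe_filter, Set.mem_ofPred_eq, Function.comp_apply, Equiv.swap_apply_left,
      Equiv.swap_apply_self] at hx ⊢
  · exact ⟨hS x hx.1, hx.2⟩
  · exact ⟨hS x hx.1, hx.2⟩

lemma card_smul_sum_rankIn {M : Type*} [Fintype V] [DecidableEq V] [Fintype ι] [AddCommMonoid M]
    {S : Finset V} {v : V} (hv : v ∈ S) (g : ℕ → M) :
    #S • ∑ f : V ≃ ι, g (rankIn f S v) = Fintype.card (V ≃ ι) • ∑ k ∈ range #S, g k := by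
  have hswap : ∀ w ∈ S, ∑ f : V ≃ ι, g (rankIn f S v) = ∑ f : V ≃ ι, g (rankIn f S w) :=
    fun w hw => by
      rw [← (Equiv.equivCongr (Equiv.swap v w) (Equiv.refl ι)).sum_comp]
      refine sum_congr rfl fun f _ => ?_
      rw [← rankIn_comp_swap f hv hw]
      rfl
  calc #S • ∑ f : V ≃ ι, g (rankIn f S v)
      = ∑ w ∈ S, ∑ f : V ≃ ι, g (rankIn f S w) := by rw [← sum_const, sum_congr rfl hswap]
    _ = ∑ f : V ≃ ι, ∑ w ∈ S, g (rankIn f S w) := sum_comm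
    _ = Fintype.card (V ≃ ι) • ∑ k ∈ range #S, g k := by
      simp only [sum_rankIn (Equiv.injective _), sum_const, card_univ]

end Rank

section BackDegree

variable {V : Type*} [Fintype V] (G : SimpleGraph V) [DecidableRel G.Adj]

def backDegree {ι : Type*} [LinearOrder ι] (f : V → ι) (v : V) : ℕ :=
  #{u ∈ G.neighborFinset v | f u < f v}

variable {G}

lemma backDegree_le_degree {ι : Type*} [LinearOrder ι] (f : V → ι) (v : V) :
    backDegree G f v ≤ G.degree v :=
  card_filter_le _ _

lemma backDegree_eq_rankIn [DecidableEq V] {ι : Type*} [LinearOrder ι] (f : V → ι) (v : V) :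
    backDegree G f v = rankIn f (insert v (G.neighborFinset v)) v := by
  rw [backDegree, rankIn, filter_insert, if_neg (lt_irrefl _)]

lemma IsRegularGraph.degree_eq {d : ℕ} (hG : IsRegularGraph G d) (v : V) : G.degree v = d := by
  rw [← hG v, ← SimpleGraph.card_neighborSet_eq_degree, Set.ncard_eq_toFinset_card',
    Set.toFinset_card]

end BackDegree

section Greedy

variable {V α : Type*} [Fintype V] [DecidableEq V] [Fintype α] [DecidableEq α]
  (G : SimpleGraph V) [DecidableRel G.Adj]

-- Proper colourings of `G[s]`, extended by the dummy colour `c₀` outside `s`.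
def properOn (c₀ : α) (s : Finset V) : Finset (V → α) :=
  {σ | (∀ u ∈ s, ∀ w ∈ s, G.Adj u w → σ u ≠ σ w) ∧ ∀ u ∉ s, σ u = c₀}

variable {G}

lemma update_mem_properOn_insert {c₀ : α} {s : Finset V} {a : V} {σ : V → α} {c : α}
    (ha : a ∉ s) (hσ : σ ∈ properOn G c₀ s) (hc : c ∉ (G.neighborFinset a ∩ s).image σ) :
    Function.update σ a c ∈ properOn G c₀ (insert a s) := by
  simp only [properOn, mem_filter, mem_univ, true_and, mem_insert] at hσ ⊢
  have hback : ∀ u ∈ s, G.Adj a u → c ≠ σ u := fun u hu hau h =>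
    hc (mem_image.2 ⟨u, mem_inter.2 ⟨(G.mem_neighborFinset a u).2 hau, hu⟩, h.symm⟩)
  refine ⟨?_, fun u hu => ?_⟩
  · rintro u (rfl | hu) w (rfl | hw) huw
    · exact absurd huw (G.loopless.irrefl _)
    · simpa [ne_of_mem_of_not_mem hw ha] using hback w hw huw
    · simpa [ne_of_mem_of_not_mem hu ha] using (hback u hu huw.symm).symm
    · simpa [ne_of_mem_of_not_mem hu ha, ne_of_mem_of_not_mem hw ha] using hσ.1 u hu w hw huw
  · obtain ⟨hua, hus⟩ := not_or.1 hu
    rw [Function.update_of_ne hua]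
    exact hσ.2 u hus

lemma card_mul_le_card_properOn_insert (c₀ : α) {s : Finset V} {a : V} (ha : a ∉ s) :
    (Fintype.card α - #(G.neighborFinset a ∩ s)) * #(properOn G c₀ s) ≤
      #(properOn G c₀ (insert a s)) := by
  calc (Fintype.card α - #(G.neighborFinset a ∩ s)) * #(properOn G c₀ s)
      = ∑ _σ ∈ properOn G c₀ s, (Fintype.card α - #(G.neighborFinset a ∩ s)) := by
        rw [sum_const, smul_eq_mul, mul_comm]
    _ ≤ ∑ σ ∈ properOn G c₀ s, #((G.neighborFinset a ∩ s).image σ)ᶜ :=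
        sum_le_sum fun σ _ => by rw [card_compl]; exact Nat.sub_le_sub_left card_image_le _
    _ = #((properOn G c₀ s).sigma fun σ => ((G.neighborFinset a ∩ s).image σ)ᶜ) :=
        card_sigma _ _ |>.symm
    _ ≤ #(properOn G c₀ (insert a s)) := by
      refine card_le_card_of_injOn (fun p => Function.update p.1 a p.2) ?_ ?_
      · rintro ⟨σ, c⟩ hp
        rw [mem_coe, mem_sigma, mem_compl] at hp
        exact update_mem_properOn_insert ha hp.1 hp.2
      · rintro ⟨σ, c⟩ hp ⟨σ', c'⟩ hp' h
        simp only [mem_coe, mem_sigma, properOn, mem_filter, mem_univ, true_and] at hp hp' h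
        obtain rfl : c = c' := by simpa using congrFun h a
        obtain rfl : σ = σ' := funext fun x => by
          by_cases hx : x = a
          · rw [hx, hp.1.2 a ha, hp'.1.2 a ha]
          · simpa [hx] using congrFun h x
        rfl

lemma prod_sub_backDegree_le_card_properOn {ι : Type*} [LinearOrder ι] (c₀ : α) {f : V → ι}
    (hf : Function.Injective f) (s : Finset V) :
    ∏ v ∈ s, (Fintype.card α - backDegree G f v) ≤ #(properOn G c₀ s) := by
  induction s using induction_on_max_value f with
  | empty =>
    rw [prod_empty, Nat.one_le_iff_ne_zero, ← pos_iff_ne_zero, card_pos]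
    exact ⟨fun _ => c₀, by simp [properOn]⟩
  | insert a s ha hmax ih =>
    have hlater : #(G.neighborFinset a ∩ s) ≤ backDegree G f a := card_le_card fun u hu => by
      rw [mem_inter] at hu
      exact mem_filter.2 ⟨hu.1, (hmax u hu.2).lt_of_ne (hf.ne (ne_of_mem_of_not_mem hu.2 ha))⟩
    rw [prod_insert ha]
    exact (Nat.mul_le_mul (Nat.sub_le_sub_left hlater _) ih).trans
      (card_mul_le_card_properOn_insert c₀ ha)

theorem prod_sub_backDegree_le_card_proper [Nonempty α] {ι : Type*} [LinearOrder ι] {f : V → ι}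
    (hf : Function.Injective f) :
    ∏ v, (Fintype.card α - backDegree G f v) ≤
      #{σ : V → α | ∀ u v, G.Adj u v → σ u ≠ σ v} := by
  refine (prod_sub_backDegree_le_card_properOn (Classical.arbitrary α) hf univ).trans
    (card_le_card fun σ hσ => ?_)
  simp only [properOn, mem_filter, mem_univ, true_and, forall_const] at hσ ⊢
  exact hσ.1

end Greedy

lemma Real.log_descFactorial {q k : ℕ} (hk : k ≤ q) :
    Real.log (q.descFactorial k) = ∑ i ∈ range k, Real.log ((q - i : ℕ) : ℝ) := by
  rw [Nat.descFactorial_eq_prod_range, Nat.cast_prod, Real.log_prod]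
  intro i hi
  have := mem_range.1 hi
  exact Nat.cast_ne_zero.2 (by omega)

section Counting

variable {V : Type*} [Fintype V] [DecidableEq V]

lemma properCount_eq_card (G : SimpleGraph V) [DecidableRel G.Adj] (q : ℕ) :
    properCount G q = #{σ : V → Fin q | ∀ u v, G.Adj u v → σ u ≠ σ v} := by
  rw [properCount, ← Set.ncard_coe_finset, coe_filter_univ]

lemma properCount_completeGraph (m q : ℕ) :
    properCount (SimpleGraph.completeGraph (Fin m)) q = q.descFactorial m := by
  classical
  have hinj : ∀ σ : Fin m → Fin q,
      (∀ u v, (SimpleGraph.completeGraph (Fin m)).Adj u v → σ u ≠ σ v) ↔ Function.Injective σ :=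
    fun σ => by simp only [SimpleGraph.top_adj, ne_eq, Function.Injective]; grind
  rw [properCount_eq_card, ← Fintype.card_subtype,
    Fintype.card_congr (Equiv.subtypeEquivRight hinj),
    Fintype.card_congr (Equiv.subtypeInjectiveEquivEmbedding _ _), Fintype.card_embedding_eq,
    Fintype.card_fin, Fintype.card_fin]

variable {G : SimpleGraph V} [DecidableRel G.Adj]

lemma sum_log_sub_backDegree_le_log_properCount {ι : Type*} [LinearOrder ι] {q : ℕ}
    (hq : ∀ v, G.degree v < q) {f : V → ι} (hf : Function.Injective f) :
    ∑ v, Real.log ((q - backDegree G f v : ℕ) : ℝ) ≤ Real.log (properCount G q) := by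
  obtain hV | ⟨⟨v⟩⟩ := isEmpty_or_nonempty V
  · simpa using Real.log_natCast_nonneg _
  have : Nonempty (Fin q) := ⟨⟨0, (Nat.zero_le _).trans_lt (hq v)⟩⟩
  have hpos : ∀ v, 0 < q - backDegree G f v := fun v =>
    Nat.sub_pos_of_lt ((backDegree_le_degree f v).trans_lt (hq v))
  have hgreedy := prod_sub_backDegree_le_card_proper (α := Fin q) (G := G) hf
  rw [Fintype.card_fin, ← properCount_eq_card] at hgreedy
  rw [← Real.log_prod fun v _ => Nat.cast_ne_zero.2 (hpos v).ne', ← Nat.cast_prod]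
  exact Real.log_le_log (Nat.cast_pos.2 (prod_pos fun v _ => hpos v)) (Nat.cast_le.2 hgreedy)

lemma card_mul_sum_log_sub_backDegree {ι : Type*} [LinearOrder ι] [Fintype ι] {q : ℕ} {v : V}
    (hq : G.degree v < q) :
    (G.degree v + 1 : ℝ) * ∑ f : V ≃ ι, Real.log ((q - backDegree G f v : ℕ) : ℝ) =
      Fintype.card (V ≃ ι) * Real.log (q.descFactorial (G.degree v + 1)) := by
  have hS : #(insert v (G.neighborFinset v)) = G.degree v + 1 := by
    rw [card_insert_of_notMem (G.notMem_neighborFinset_self v), G.card_neighborFinset_eq_degree]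
  have := card_smul_sum_rankIn (ι := ι) (mem_insert_self v (G.neighborFinset v))
    fun k => Real.log ((q - k : ℕ) : ℝ)
  simp only [nsmul_eq_mul, hS, ← backDegree_eq_rankIn] at this
  rw [Real.log_descFactorial (by omega)]
  exact_mod_cast this

theorem sum_log_descFactorial_div_le_log_properCount {q : ℕ} (hq : ∀ v, G.degree v < q) :
    ∑ v, Real.log (q.descFactorial (G.degree v + 1)) / (G.degree v + 1) ≤
      Real.log (properCount G q) := by
  have hvertex : ∀ v, ∑ f : V ≃ Fin (Fintype.card V), Real.log ((q - backDegree G f v : ℕ) : ℝ)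
      = ∑ _f : V ≃ Fin (Fintype.card V),
          Real.log (q.descFactorial (G.degree v + 1)) / (G.degree v + 1) := fun v => by
    rw [sum_const, card_univ, nsmul_eq_mul, ← mul_div_assoc, eq_div_iff (by positivity), mul_comm,
      card_mul_sum_log_sub_backDegree (hq v)]
  obtain ⟨f, -, hf⟩ := exists_le_of_sum_le (univ_nonempty_iff.2 ⟨Fintype.equivFin V⟩)
    (sum_comm.trans ((sum_congr rfl fun v _ => hvertex v).symm.trans sum_comm)).le
  exact hf.trans (sum_log_sub_backDegree_le_log_properCount hq f.injective)

end Counting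

theorem stmt8 {V : Type*} [Fintype V] [DecidableEq V] [Nonempty V]
    (G : SimpleGraph V) (hG : IsRegularGraph G 4) (q : ℕ) (hq : 5 ≤ q) :
    (1 / 5 : ℝ) * Real.log (properCount K5 q) ≤
      (1 / (Fintype.card V : ℝ)) * Real.log (properCount G q) := by
  classical
  have hdeg := hG.degree_eq
  have hbound : (Fintype.card V : ℝ) * (Real.log (q.descFactorial 5) / 5) ≤
      Real.log (properCount G q) := by
    have := sum_log_descFactorial_div_le_log_properCount (G := G) (q := q)
      fun v => by rw [hdeg]; omega
    norm_num only [hdeg, sum_const, card_univ, nsmul_eq_mul] at this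
    exact this
  have hn : (0 : ℝ) < Fintype.card V := Nat.cast_pos.2 Fintype.card_pos
  rw [K5, properCount_completeGraph, one_div_mul_eq_div, one_div_mul_eq_div, le_div_iff₀ hn]
  linarith
end
end
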